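/- Let a > 0 and 0 < b < 1, and let x* = (1/a)·ln(b/(1−b)) be the unique fixed point of the EOS map F_{a,b}. Then |F_{a,b}'(x*)| < 1 if and only if a·b·(1−b) < 2. Moreover, if a ≥ 8, this holds if and only if b < β or b > 1 − β, where β = (1 − √(1 − 8/a))/2. -/

import Mathlib

/-- The EOS map with parameters `a`, `b`: `F_{a,b}(x) = x + b - 1/(e^{-ax} + 1)`. -/
noncomputable def eosMap (a b x : ℝ) : ℝ := x + b - 1 / (Real.exp (-(a * x)) + 1)

/-!
The last term of the EOS map is the logistic sigmoid `σ(ax)`, so `F'(x) = 1 - a σ(ax)(1 - σ(ax))`,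
and `σ(a x*) = b` at the fixed point. Hence `F'(x*) = 1 - a b (1 - b)` with `a b (1 - b) > 0`, which
lies in `(-1, 1)` exactly when `a b (1 - b) < 2`. For `a ≥ 8` the quadratic `a b (1 - b) - 2` in `b`
has the real roots `β ≤ 1 - β`, and is negative outside them.
-/

open Real

theorem eosMap_eq (a b : ℝ) : eosMap a b = fun x ↦ x + b - sigmoid (a * x) := by
  funext x
  simp only [eosMap, sigmoid_def, one_div, add_comm (exp _)]

theorem hasDerivAt_eosMap (a b x : ℝ) :
    HasDerivAt (eosMap a b) (1 - a * (sigmoid (a * x) * (1 - sigmoid (a * x)))) x := by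
  rw [eosMap_eq]
  have hσ := (hasDerivAt_sigmoid (a * x)).comp x ((hasDerivAt_id x).const_mul a)
  exact (((hasDerivAt_id x).add_const b).sub hσ).congr_deriv (by simp only [mul_one]; ring)

theorem sigmoid_log_div_one_sub {p : ℝ} (hp0 : 0 < p) (hp1 : p < 1) :
    sigmoid (log (p / (1 - p))) = p := by
  have hq : 0 < 1 - p := sub_pos.mpr hp1
  rw [sigmoid_def, exp_neg, exp_log (div_pos hp0 hq)]
  field_simp
  ring

theorem deriv_eosMap_fixedPoint {a b : ℝ} (ha : a ≠ 0) (hb0 : 0 < b) (hb1 : b < 1) :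
    deriv (eosMap a b) ((1 / a) * log (b / (1 - b))) = 1 - a * b * (1 - b) := by
  have hx : a * ((1 / a) * log (b / (1 - b))) = log (b / (1 - b)) := by field_simp
  rw [(hasDerivAt_eosMap a b _).deriv, hx, sigmoid_log_div_one_sub hb0 hb1, mul_assoc]

theorem abs_one_sub_lt_one_iff {t : ℝ} (ht : 0 < t) : |1 - t| < 1 ↔ t < 2 := by
  rw [abs_lt]
  constructor
  · rintro ⟨h, -⟩
    linarith
  · intro h
    constructor <;> linarith

-- `β (1 - β) = (1 - (1 - 8/a)) / 4 = 2 / a` for `β = (1 - √(1 - 8/a)) / 2`.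
theorem mul_mul_one_sub_sub_two_eq {a : ℝ} (ha : 8 ≤ a) (b : ℝ) :
    a * b * (1 - b) - 2 =
      -a * ((b - (1 - √(1 - 8 / a)) / 2) * (b - (1 - (1 - √(1 - 8 / a)) / 2))) := by
  have hs : a * √(1 - 8 / a) ^ 2 = a - 8 := by
    rw [sq_sqrt (sub_nonneg.mpr ((div_le_one (by positivity)).mpr ha))]
    field_simp
  linear_combination (-1 / 4 : ℝ) * hs

theorem mul_mul_one_sub_lt_two_iff {a : ℝ} (ha : 8 ≤ a) (b : ℝ) :
    a * b * (1 - b) < 2 ↔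
      b < (1 - √(1 - 8 / a)) / 2 ∨ 1 - (1 - √(1 - 8 / a)) / 2 < b := by
  have hβ : (1 - √(1 - 8 / a)) / 2 ≤ 1 - (1 - √(1 - 8 / a)) / 2 := by
    linarith [sqrt_nonneg (1 - 8 / a)]
  rw [← sub_neg, mul_mul_one_sub_sub_two_eq ha, neg_mul, neg_lt_zero,
    mul_pos_iff_of_pos_left (by positivity), sub_mul_sub_pos_iff b hβ]

/-- Let `a > 0`, `0 < b < 1` and `x* = (1/a)·ln(b/(1-b))` be the unique fixed point of
the EOS map. Then `|F_{a,b}'(x*)| < 1 ↔ a·b·(1-b) < 2`; moreover if `a ≥ 8`, this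
holds iff `b < β` or `b > 1 - β`, where `β = (1 - √(1 - 8/a))/2`. -/
theorem eosMap_attracting_fixed_point (a b : ℝ) (ha : 0 < a) (hb0 : 0 < b) (hb1 : b < 1) :
    (|deriv (eosMap a b) ((1 / a) * Real.log (b / (1 - b)))| < 1 ↔
        a * b * (1 - b) < 2) ∧
    (8 ≤ a →
      (|deriv (eosMap a b) ((1 / a) * Real.log (b / (1 - b)))| < 1 ↔
        b < (1 - Real.sqrt (1 - 8 / a)) / 2 ∨ 1 - (1 - Real.sqrt (1 - 8 / a)) / 2 < b)) := by
  have hpos : 0 < a * b * (1 - b) := by have := sub_pos.mpr hb1; positivity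
  have hattracting : |deriv (eosMap a b) ((1 / a) * log (b / (1 - b)))| < 1 ↔
      a * b * (1 - b) < 2 := by
    rw [deriv_eosMap_fixedPoint ha.ne' hb0 hb1, abs_one_sub_lt_one_iff hpos]
  exact ⟨hattracting, fun ha8 ↦ hattracting.trans (mul_mul_one_sub_lt_two_iff ha8 b)⟩
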